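/- arXiv:1911.03608 — 9 statements merged into one kernel-verified Lean document; each statement's English description precedes it below -/
import Mathlib

section
/- For all quaternions a, b and all unit quaternions p, q (‖p‖ = ‖q‖ = 1): ‖p a q̄‖ = ‖a‖, ‖p b q̄‖ = ‖b‖, and moreover 2·(p a q̄)·conj(p b q̄) = p·(2 a b̄)·p̄ and 2·conj(p a q̄)·(p b q̄) = q·(2 ā b)·q̄. Equivalently, h(p a q̄, p b q̄) has the same first component as h(a,b) and second component conjugated by p, while h̃(p a q̄, p b q̄) has the same first component as h̃(a,b) and second component conjugated by q. -/
section StarMonoid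

variable {R : Type*} [Monoid R] [StarMul R]

theorem mul_star_mul_star_eq_conj {q : R} (hq : star q * q = 1) (p a b : R) :
    p * a * star q * star (p * b * star q) = p * (a * star b) * star p := by
  simp only [star_mul, star_star, mul_assoc]
  rw [← mul_assoc (star q), hq, one_mul]

theorem star_mul_mul_star_eq_conj {p : R} (hp : star p * p = 1) (q a b : R) :
    star (p * a * star q) * (p * b * star q) = q * (star a * b) * star q := by
  simp only [star_mul, star_star, mul_assoc]
  rw [← mul_assoc (star p), hp, one_mul]

end StarMonoid

theorem norm_mul_mul_star {R : Type*} [NormedDivisionRing R] [StarRing R] [NormedStarGroup R]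
    {p q : R} (hp : ‖p‖ = 1) (hq : ‖q‖ = 1) (a : R) : ‖p * a * star q‖ = ‖a‖ := by
  rw [norm_mul, norm_mul, norm_star, hp, hq, one_mul, mul_one]

theorem Quaternion.star_mul_self_eq_one_of_norm_eq_one {q : Quaternion ℝ} (hq : ‖q‖ = 1) :
    star q * q = 1 := by
  rw [Quaternion.star_mul_self, Quaternion.normSq_eq_norm_mul_self, hq, mul_one,
    Quaternion.coe_one]

/-- Equivariance of the Hopf-type maps under the
`S³ × S³`-action `(a,b) ↦ (p a q̄, p b q̄)`: norms are preserved, the second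
component of `h` is conjugated by `p`, and the second component of `h̃` is
conjugated by `q`. -/
theorem hopf_maps_equivariance (a b p q : Quaternion ℝ)
    (hp : ‖p‖ = 1) (hq : ‖q‖ = 1) :
    ‖p * a * star q‖ = ‖a‖ ∧
    ‖p * b * star q‖ = ‖b‖ ∧
    2 * ((p * a * star q) * star (p * b * star q)) = p * (2 * (a * star b)) * star p ∧
    2 * (star (p * a * star q) * (p * b * star q)) = q * (2 * (star a * b)) * star q := by
  refine ⟨norm_mul_mul_star hp hq a, norm_mul_mul_star hp hq b, ?_, ?_⟩
  · rw [mul_star_mul_star_eq_conj (Quaternion.star_mul_self_eq_one_of_norm_eq_one hq),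
      ← mul_assoc 2, (Commute.ofNat_left 2 p).left_comm]
  · rw [star_mul_mul_star_eq_conj (Quaternion.star_mul_self_eq_one_of_norm_eq_one hp),
      ← mul_assoc 2, (Commute.ofNat_left 2 q).left_comm]
end

section
/- Let a, b, a', b' be quaternions with ‖a‖² + ‖b‖² = 1 and ‖a'‖² + ‖b'‖² = 1. Then h(a,b) = h(a',b') (i.e. ‖a‖² − ‖b‖² = ‖a'‖² − ‖b'‖² and a·b̄ = a'·conj(b')) if and only if there exists a unit quaternion q (‖q‖ = 1) with a' = a·q and b' = b·q. In other words, the fibers of the Hopf map h : S⁷ → S⁴ are exactly the orbits of the diagonal right multiplication action of the unit quaternions S³ on S⁷. -/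
/-!
If `(a', b') = (a q, b q)` with `(a, b) ∈ S⁷`, then `q` is the quaternionic Hermitian product
`ā a' + b̄ b'`; this is the candidate for the converse. On the sphere, equal `‖a‖² - ‖b‖²` forces
`‖a‖ = ‖a'‖` and `‖b‖ = ‖b'‖`, and with `a b̄ = a' b̄'` this gives `a q = a'` and `b q = b'`.
Then `‖q‖² = ‖a q‖² + ‖b q‖² = ‖a'‖² + ‖b'‖² = 1`.
-/

open Quaternion

namespace Quaternion

theorem self_mul_star_mul (x y : ℍ) : x * (star x * y) = ‖x‖ ^ 2 • y := by
  rw [← mul_assoc, self_mul_star, coe_mul_eq_smul, normSq_eq_norm_mul_self, sq]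

theorem mul_star_mul_self (x y : ℍ) : y * star x * x = ‖x‖ ^ 2 • y := by
  rw [mul_assoc, star_mul_self, mul_coe_eq_smul, normSq_eq_norm_mul_self, sq]

theorem mul_mul_star_mul_of_norm_eq_one {q : ℍ} (hq : ‖q‖ = 1) (a b : ℍ) :
    a * q * star (b * q) = a * star b := by
  rw [star_mul, mul_assoc, ← mul_assoc q, self_mul_star, normSq_eq_norm_mul_self, hq]
  simp

noncomputable def hermitianInner (a b a' b' : ℍ) : ℍ :=
  star a * a' + star b * b'

variable {a b a' b' : ℍ}

theorem mul_hermitianInner_left (h : a * star b = a' * star b') :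
    a * hermitianInner a b a' b' = (‖a‖ ^ 2 + ‖b'‖ ^ 2) • a' := by
  rw [hermitianInner, mul_add, self_mul_star_mul, ← mul_assoc, h, mul_star_mul_self, add_smul]

theorem mul_hermitianInner_right (h : a * star b = a' * star b') :
    b * hermitianInner a b a' b' = (‖a'‖ ^ 2 + ‖b‖ ^ 2) • b' := by
  have hswap : b * star a = b' * star a' := by
    simpa only [star_mul, star_star] using congrArg star h
  rw [hermitianInner, mul_add, self_mul_star_mul, ← mul_assoc, hswap, mul_star_mul_self, add_smul]

end Quaternion

/-- The fibers of the Hopf map `h : S⁷ → S⁴` are exactly the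
orbits of the diagonal right multiplication action of the unit quaternions
`S³` on `S⁷`. -/
theorem hopf_fibers_are_orbits (a b a' b' : Quaternion ℝ)
    (hab : ‖a‖ ^ 2 + ‖b‖ ^ 2 = 1) (hab' : ‖a'‖ ^ 2 + ‖b'‖ ^ 2 = 1) :
    (‖a‖ ^ 2 - ‖b‖ ^ 2 = ‖a'‖ ^ 2 - ‖b'‖ ^ 2 ∧ a * star b = a' * star b') ↔
    ∃ q : Quaternion ℝ, ‖q‖ = 1 ∧ a' = a * q ∧ b' = b * q := by
  constructor
  · rintro ⟨hdiff, hmul⟩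
    have hb : ‖b'‖ ^ 2 = ‖b‖ ^ 2 := by linarith
    have ha : ‖a'‖ ^ 2 = ‖a‖ ^ 2 := by linarith
    set q := hermitianInner a b a' b'
    have haq : a * q = a' := by rw [mul_hermitianInner_left hmul, hb, hab, one_smul]
    have hbq : b * q = b' := by rw [mul_hermitianInner_right hmul, ha, hab, one_smul]
    have hq : ‖q‖ ^ 2 = 1 :=
      calc ‖q‖ ^ 2 = ‖a * q‖ ^ 2 + ‖b * q‖ ^ 2 := by
            rw [norm_mul, norm_mul, mul_pow, mul_pow, ← add_mul, hab, one_mul]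
        _ = 1 := by rw [haq, hbq, hab']
    exact ⟨q, (pow_eq_one_iff_of_nonneg (norm_nonneg q) two_ne_zero).mp hq, haq.symm, hbq.symm⟩
  · rintro ⟨q, hq, rfl, rfl⟩
    exact ⟨by simp only [norm_mul, hq, mul_one], (mul_mul_star_mul_of_norm_eq_one hq a b).symm⟩
end

section
/- Let a, b, c, d be quaternions with ‖a‖² + ‖b‖² = 1 and ‖c‖² + ‖d‖² = 1. Then ā·c + b̄·d = 0 if and only if both ‖a‖² − ‖b‖² = −(‖c‖² − ‖d‖²) and 2·a·b̄ = −(2·c·d̄). Equivalently: the pair of orthonormal columns ((a,b),(c,d)) lies in the quaternionic unitary group Sp(2) if and only if h(a,b) = α(h(c,d)), where α is the antipodal map. This identifies Sp(2) with {(u₁,u₂) ∈ S⁷×S⁷ : h(u₁) = α h(u₂)}. -/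
/-!
Let `U` be the quaternionic `2 × 2` matrix with columns `(a, b)` and `(c, d)`. The columns are
orthonormal iff `Uᴴ * U = 1`. Matrices over a division ring are Dedekind-finite, so this is
equivalent to `U * Uᴴ = 1`: the rows are orthonormal as well. For unit columns, the row
conditions are `‖a‖² + ‖c‖² = 1`, which is the real component of `h(a,b) = -h(c,d)`, and
`a b̄ + c d̄ = 0`, which is its quaternionic component.
-/

open Matrix Quaternion

section StarRing

variable {R : Type*} [Semiring R] [StarRing R]

theorem Matrix.conjTranspose_mul_self_fin_two_eq_one_iff (a b c d : R) :
    !![a, c; b, d]ᴴ * !![a, c; b, d] = 1 ↔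
      star a * a + star b * b = 1 ∧ star c * c + star d * d = 1 ∧
        star a * c + star b * d = 0 := by
  have h : star c * a + star d * b = star (star a * c + star b * d) := by
    simp only [star_add, star_mul, star_star]
  simp only [← Matrix.ext_iff, Fin.forall_fin_two, mul_apply, Fin.sum_univ_two,
    conjTranspose_apply, of_apply, cons_val', cons_val_zero, cons_val_one, cons_val_fin_one,
    one_apply_eq, one_apply_ne zero_ne_one, one_apply_ne one_ne_zero, h, star_eq_zero]
  tauto

theorem Matrix.mul_conjTranspose_self_fin_two_eq_one_iff (a b c d : R) :
    !![a, c; b, d] * !![a, c; b, d]ᴴ = 1 ↔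
      a * star a + c * star c = 1 ∧ b * star b + d * star d = 1 ∧
        a * star b + c * star d = 0 := by
  have hU : !![a, c; b, d] = !![star a, star b; star c, star d]ᴴ := by
    ext i j; fin_cases i <;> fin_cases j <;> simp
  rw [hU, conjTranspose_conjTranspose, conjTranspose_mul_self_fin_two_eq_one_iff]
  simp only [star_star]

end StarRing

theorem Quaternion.star_mul_self_add_star_mul_self_eq_one_iff (a b : ℍ) :
    star a * a + star b * b = 1 ↔ ‖a‖ ^ 2 + ‖b‖ ^ 2 = 1 := by
  rw [star_mul_self, star_mul_self, ← coe_add, ← coe_one, coe_injective.eq_iff,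
    normSq_eq_norm_mul_self, normSq_eq_norm_mul_self, sq, sq]

theorem Quaternion.self_mul_star_add_self_mul_star_eq_one_iff (a b : ℍ) :
    a * star a + b * star b = 1 ↔ ‖a‖ ^ 2 + ‖b‖ ^ 2 = 1 := by
  simpa only [star_star, norm_star] using
    star_mul_self_add_star_mul_self_eq_one_iff (star a) (star b)

/-- A pair of unit columns `((a,b),(c,d))` is orthonormal
(i.e. lies in `Sp(2)`) if and only if `h(a,b) = α(h(c,d))`, where `α` is the
antipodal map of `ℝ × ℍ`.  This identifies `Sp(2)` with
`{(u₁,u₂) ∈ S⁷×S⁷ : h(u₁) = α h(u₂)}`. -/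
theorem sp2_iff_hopf_antipodal (a b c d : Quaternion ℝ)
    (hab : ‖a‖ ^ 2 + ‖b‖ ^ 2 = 1) (hcd : ‖c‖ ^ 2 + ‖d‖ ^ 2 = 1) :
    star a * c + star b * d = 0 ↔
      (‖a‖ ^ 2 - ‖b‖ ^ 2 = -(‖c‖ ^ 2 - ‖d‖ ^ 2) ∧
       2 * (a * star b) = -(2 * (c * star d))) := by
  have two_ne_zero' : (2 : ℍ) ≠ 0 := by exact_mod_cast coe_injective.ne (two_ne_zero (α := ℝ))
  have hrow : 2 * (a * star b) = -(2 * (c * star d)) ↔ a * star b + c * star d = 0 := by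
    rw [← mul_neg, ← sub_eq_zero, ← mul_sub, sub_neg_eq_add, mul_eq_zero,
      or_iff_right two_ne_zero']
  calc star a * c + star b * d = 0 ↔ !![a, c; b, d]ᴴ * !![a, c; b, d] = 1 := by
        rw [conjTranspose_mul_self_fin_two_eq_one_iff,
          star_mul_self_add_star_mul_self_eq_one_iff, star_mul_self_add_star_mul_self_eq_one_iff]
        simp only [hab, hcd, true_and]
    _ ↔ !![a, c; b, d] * !![a, c; b, d]ᴴ = 1 := mul_eq_one_comm
    _ ↔ _ := by
        rw [mul_conjTranspose_self_fin_two_eq_one_iff, self_mul_star_add_self_mul_star_eq_one_iff,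
          self_mul_star_add_self_mul_star_eq_one_iff, hrow]
        constructor
        · rintro ⟨hac, -, h⟩
          exact ⟨by linarith, h⟩
        · rintro ⟨h, h'⟩
          exact ⟨by linarith, by linarith, h'⟩
end

section
/- Two elements of Sp(2) with the same first column differ by a unique right multiplication of the second column by a unit quaternion: if ((a,b),(c,d)) ∈ Sp(2) and ((a,b),(c',d')) ∈ Sp(2), then there exists a unique quaternion q with ‖q‖ = 1, c' = c·q and d' = d·q. In other words, the fibers of the first-column projection pr₁ : Sp(2) → S⁷ are exactly the orbits of the free right S³-action on the second column. -/
/-!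
The first column `(a, b)` is nonzero, so `ā x + b̄ y = 0` is a nontrivial right-linear equation
over the division ring `ℍ`, whose solutions form a right `ℍ`-line. Hence `(c', d') = (c, d) q`
for some `q`, unique since `(c, d) ≠ 0`; multiplicativity of the norm then forces `‖q‖ = 1`.
-/

section DivisionRing

variable {R : Type*} [DivisionRing R] {u v c d c' d' : R}

theorem exists_eq_mul_right_of_mul_add_mul_eq_zero_of_left_ne_zero (hu : u ≠ 0)
    (hcd : c ≠ 0 ∨ d ≠ 0) (h : u * c + v * d = 0) (h' : u * c' + v * d' = 0) :
    ∃ q, c' = c * q ∧ d' = d * q := by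
  have solve {x y : R} (hxy : u * x + v * y = 0) : x = -(u⁻¹ * (v * y)) := by
    rw [← inv_mul_cancel_left₀ hu x, eq_neg_of_add_eq_zero_left hxy, mul_neg]
  have hd : d ≠ 0 := by
    rintro rfl
    simp [solve h] at hcd
  refine ⟨d⁻¹ * d', ?_, (mul_inv_cancel_left₀ hd d').symm⟩
  rw [solve h, solve h', neg_mul, mul_assoc, mul_assoc, mul_inv_cancel_left₀ hd]

theorem exists_eq_mul_right_of_mul_add_mul_eq_zero (huv : u ≠ 0 ∨ v ≠ 0)
    (hcd : c ≠ 0 ∨ d ≠ 0) (h : u * c + v * d = 0) (h' : u * c' + v * d' = 0) :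
    ∃ q, c' = c * q ∧ d' = d * q := by
  rcases huv with hu | hv
  · exact exists_eq_mul_right_of_mul_add_mul_eq_zero_of_left_ne_zero hu hcd h h'
  · rw [add_comm] at h h'
    obtain ⟨q, hd', hc'⟩ :=
      exists_eq_mul_right_of_mul_add_mul_eq_zero_of_left_ne_zero hv hcd.symm h h'
    exact ⟨q, hc', hd'⟩

end DivisionRing

theorem ne_zero_or_ne_zero_of_norm_sq_add_norm_sq_eq_one {E : Type*} [NormedAddCommGroup E]
    {x y : E} (h : ‖x‖ ^ 2 + ‖y‖ ^ 2 = 1) : x ≠ 0 ∨ y ≠ 0 := by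
  by_contra! hxy
  simp [hxy] at h

theorem norm_eq_one_of_norm_sq_add_norm_sq_mul_eq_one {R : Type*} [NormedDivisionRing R]
    {c d q : R} (h : ‖c‖ ^ 2 + ‖d‖ ^ 2 = 1) (hq : ‖c * q‖ ^ 2 + ‖d * q‖ ^ 2 = 1) :
    ‖q‖ = 1 := by
  have hq2 : ‖q‖ ^ 2 = 1 := by
    calc ‖q‖ ^ 2 = (‖c‖ ^ 2 + ‖d‖ ^ 2) * ‖q‖ ^ 2 := by rw [h, one_mul]
      _ = 1 := by rw [← hq, norm_mul, norm_mul]; ring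
  exact (pow_eq_one_iff_of_nonneg (norm_nonneg q) two_ne_zero).mp hq2

/-- Two elements of `Sp(2)` with the same first column differ by
a unique right multiplication of the second column by a unit quaternion: the
fibers of `pr₁ : Sp(2) → S⁷` are exactly the orbits of the free right
`S³`-action on the second column. -/
theorem sp2_fiber_unique_unit_quaternion (a b c d c' d' : Quaternion ℝ)
    (hab : ‖a‖ ^ 2 + ‖b‖ ^ 2 = 1)
    (hcd : ‖c‖ ^ 2 + ‖d‖ ^ 2 = 1) (hcd' : ‖c'‖ ^ 2 + ‖d'‖ ^ 2 = 1)
    (horth : star a * c + star b * d = 0)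
    (horth' : star a * c' + star b * d' = 0) :
    ∃! q : Quaternion ℝ, ‖q‖ = 1 ∧ c' = c * q ∧ d' = d * q := by
  have hcd_ne := ne_zero_or_ne_zero_of_norm_sq_add_norm_sq_eq_one hcd
  have hab_ne : star a ≠ 0 ∨ star b ≠ 0 := by
    simpa only [ne_eq, star_eq_zero] using ne_zero_or_ne_zero_of_norm_sq_add_norm_sq_eq_one hab
  obtain ⟨q, hc', hd'⟩ := exists_eq_mul_right_of_mul_add_mul_eq_zero hab_ne hcd_ne horth horth'
  refine ⟨q, ⟨norm_eq_one_of_norm_sq_add_norm_sq_mul_eq_one hcd ?_, hc', hd'⟩, ?_⟩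
  · rwa [← hc', ← hd']
  · rintro r ⟨-, hrc, hrd⟩
    rcases hcd_ne with hc | hd
    · exact mul_left_cancel₀ hc (hrc.symm.trans hc')
    · exact mul_left_cancel₀ hd (hrd.symm.trans hd')
end

section
/- The Gromoll–Meyer ⋆-action preserves Sp(2) and is free: for every unit quaternion q and every ((a,b),(c,d)) ∈ Sp(2), the element ((q a q̄, q b q̄),(q c, q d)) again lies in Sp(2) (that is, ‖q a q̄‖² + ‖q b q̄‖² = 1, ‖q c‖² + ‖q d‖² = 1 and conj(q a q̄)·(q c) + conj(q b q̄)·(q d) = 0); moreover, if (q a q̄, q b q̄, q c, q d) = (a, b, c, d) then q = 1. -/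
/-!
A unit quaternion `q` is unitary, so `x ↦ q x q̄` and `x ↦ q x` are isometries and
`conj (q x q̄) (q y) = q (x̄ y)`; hence both columns stay unit vectors and stay orthogonal.
Freeness: `(c, d)` is a unit vector, so one of `c`, `d` is nonzero, and `q c = c` (or `q d = d`)
forces `q = 1` in the division ring `ℍ`.
-/

theorem Quaternion.mem_unitary_of_norm_eq_one {q : Quaternion ℝ} (hq : ‖q‖ = 1) :
    q ∈ unitary (Quaternion ℝ) := by
  have hnormSq : Quaternion.normSq q = 1 := by
    rw [Quaternion.normSq_eq_norm_mul_self, hq, mul_one]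
  rw [Unitary.mem_iff, Quaternion.star_mul_self, Quaternion.self_mul_star, hnormSq]
  exact ⟨Quaternion.coe_one, Quaternion.coe_one⟩

theorem star_conj_mul_mul_of_mem_unitary {R : Type*} [Monoid R] [StarMul R] {U : R}
    (hU : U ∈ unitary R) (A B : R) :
    star (U * A * star U) * (U * B) = U * (star A * B) := by
  calc star (U * A * star U) * (U * B) = U * star A * (star U * U) * B := by
        simp only [star_mul, star_star, mul_assoc]
    _ = U * (star A * B) := by
        rw [Unitary.star_mul_self_of_mem hU, mul_one, mul_assoc]

theorem CStarRing.norm_conj_of_mem_unitary {E : Type*} [NormedRing E] [StarRing E] [CStarRing E]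
    {U : E} (hU : U ∈ unitary E) (A : E) : ‖U * A * star U‖ = ‖A‖ := by
  rw [CStarRing.norm_mul_mem_unitary _ (Unitary.star_mem hU), CStarRing.norm_mem_unitary_mul _ hU]

/-- The Gromoll–Meyer ⋆-action
`q ⋆ ((a,b),(c,d)) = ((q a q̄, q b q̄),(q c, q d))` preserves `Sp(2)` and is
free. -/
theorem gromoll_meyer_star_action (q a b c d : Quaternion ℝ)
    (hq : ‖q‖ = 1)
    (hab : ‖a‖ ^ 2 + ‖b‖ ^ 2 = 1) (hcd : ‖c‖ ^ 2 + ‖d‖ ^ 2 = 1)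
    (horth : star a * c + star b * d = 0) :
    (‖q * a * star q‖ ^ 2 + ‖q * b * star q‖ ^ 2 = 1 ∧
     ‖q * c‖ ^ 2 + ‖q * d‖ ^ 2 = 1 ∧
     star (q * a * star q) * (q * c) + star (q * b * star q) * (q * d) = 0) ∧
    ((q * a * star q = a ∧ q * b * star q = b ∧ q * c = c ∧ q * d = d) → q = 1) := by
  have hu := Quaternion.mem_unitary_of_norm_eq_one hq
  refine ⟨⟨?_, ?_, ?_⟩, ?_⟩
  · rwa [CStarRing.norm_conj_of_mem_unitary hu, CStarRing.norm_conj_of_mem_unitary hu]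
  · rwa [CStarRing.norm_mem_unitary_mul _ hu, CStarRing.norm_mem_unitary_mul _ hu]
  · rw [star_conj_mul_mul_of_mem_unitary hu, star_conj_mul_mul_of_mem_unitary hu, ← mul_add,
      horth, mul_zero]
  · rintro ⟨-, -, hqc, hqd⟩
    have hcd_ne : c ≠ 0 ∨ d ≠ 0 := by
      by_contra! h
      simp [h.1, h.2] at hcd
    rcases hcd_ne with hc | hd
    · exact (mul_eq_right₀ hc).mp hqc
    · exact (mul_eq_right₀ hd).mp hqd
end

section
/- Equivalent description of Sp(2,m): let m ≥ 3 and let u₁, …, u_m ∈ S⁷ ⊂ ℍ×ℍ. Then the conditions h(u₁) = α h(u₂) and h̃(u_i) = α h(u_{i+1}) for all 2 ≤ i ≤ m−1 hold if and only if (u₁, u₂) ∈ Sp(2) and (k(u_i), u_{i+1}) ∈ Sp(2) for all 2 ≤ i ≤ m−1. Hence Sp(2,m) = {(u₁,…,u_m) ∈ (S⁷)^m : (u₁,u₂), (k u₂, u₃), …, (k u_{m−1}, u_m) ∈ Sp(2)}. -/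
/-- The Hopf-type map `h(a,b) = (‖a‖²−‖b‖², 2 a b̄)`. -/
noncomputable def hopfH (u : Quaternion ℝ × Quaternion ℝ) : ℝ × Quaternion ℝ :=
  (‖u.1‖ ^ 2 - ‖u.2‖ ^ 2, 2 * (u.1 * star u.2))

/-- The Hopf-type map `h̃(a,b) = (‖a‖²−‖b‖², 2 ā b)`. -/
noncomputable def hopfHt (u : Quaternion ℝ × Quaternion ℝ) : ℝ × Quaternion ℝ :=
  (‖u.1‖ ^ 2 - ‖u.2‖ ^ 2, 2 * (star u.1 * u.2))

/-- The antipodal map of `ℝ × ℍ`. -/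
def antipodal (x : ℝ × Quaternion ℝ) : ℝ × Quaternion ℝ := (-x.1, -x.2)

/-- Componentwise quaternionic conjugation `k(a,b) = (ā, b̄)`. -/
def kConj (u : Quaternion ℝ × Quaternion ℝ) : Quaternion ℝ × Quaternion ℝ :=
  (star u.1, star u.2)

/-- `Sp(2)` as the set of pairs of orthonormal columns in `S⁷ × S⁷`. -/
def Sp2Set : Set ((Quaternion ℝ × Quaternion ℝ) × (Quaternion ℝ × Quaternion ℝ)) :=
  {P | ‖P.1.1‖ ^ 2 + ‖P.1.2‖ ^ 2 = 1 ∧ ‖P.2.1‖ ^ 2 + ‖P.2.2‖ ^ 2 = 1 ∧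
       star P.1.1 * P.2.1 + star P.1.2 * P.2.2 = 0}

/-! Put `x, y ∈ S⁷` as the columns of a `2 × 2` quaternionic matrix `M`. Then `(x, y) ∈ Sp(2)`
says `M⋆M = 1`, while `h(x) = α h(y)` says that the rows of `M` are orthonormal, `MM⋆ = 1`.
The two are equivalent because matrix rings over a division ring are Dedekind-finite.
Since `h̃ = h ∘ k` and `k` preserves `S⁷`, the conditions defining `Sp(2,m)` are, term by term,
memberships in `Sp(2)`. -/

open Quaternion

instance Quaternion.instCharZero : CharZero ℍ :=
  charZero_of_injective_algebraMap (algebraMap ℝ ℍ).injective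

theorem Matrix.star_fin_two {α : Type*} [Star α] (a b c d : α) :
    star !![a, b; c, d] = !![star a, star c; star b, star d] := by
  ext i j; fin_cases i <;> fin_cases j <;> rfl

theorem Matrix.fin_two_eq_one_iff {α : Type*} [Zero α] [One α] (a b c d : α) :
    !![a, b; c, d] = 1 ↔ a = 1 ∧ b = 0 ∧ c = 0 ∧ d = 1 := by
  simp [Matrix.one_fin_two, and_assoc]

lemma Quaternion.star_mul_self_eq_coe_norm_sq (a : ℍ) : star a * a = ((‖a‖ ^ 2 : ℝ) : ℍ) := by
  rw [star_mul_self, normSq_eq_norm_mul_self, sq]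

lemma Quaternion.mul_star_self_eq_coe_norm_sq (a : ℍ) : a * star a = ((‖a‖ ^ 2 : ℝ) : ℍ) := by
  rw [self_mul_star, normSq_eq_norm_mul_self, sq]

def pairMatrix (x y : ℍ × ℍ) : Matrix (Fin 2) (Fin 2) ℍ := !![x.1, y.1; x.2, y.2]

lemma mem_Sp2Set_iff_star_mul_self_eq_one (x y : ℍ × ℍ) :
    (x, y) ∈ Sp2Set ↔ star (pairMatrix x y) * pairMatrix x y = 1 := by
  have h_entry_10 : star y.1 * x.1 + star y.2 * x.2 = star (star x.1 * y.1 + star x.2 * y.2) := by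
    simp only [star_add, star_mul, star_star]
  simp only [Sp2Set, Set.mem_ofPred_eq, pairMatrix, Matrix.star_fin_two, Matrix.mul_fin_two,
    Matrix.fin_two_eq_one_iff, star_mul_self_eq_coe_norm_sq, ← coe_add, ← coe_one, coe_inj, h_entry_10,
    star_eq_zero]
  tauto

lemma hopfH_eq_antipodal_iff_mul_star_self_eq_one {x y : ℍ × ℍ}
    (hx : ‖x.1‖ ^ 2 + ‖x.2‖ ^ 2 = 1) (hy : ‖y.1‖ ^ 2 + ‖y.2‖ ^ 2 = 1) :
    hopfH x = antipodal (hopfH y) ↔ pairMatrix x y * star (pairMatrix x y) = 1 := by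
  have h_entry_10 : x.2 * star x.1 + y.2 * star y.1 = star (x.1 * star x.2 + y.1 * star y.2) := by
    simp only [star_add, star_mul, star_star]
  have h_norms : ‖x.1‖ ^ 2 - ‖x.2‖ ^ 2 = -(‖y.1‖ ^ 2 - ‖y.2‖ ^ 2) ↔
      ‖x.1‖ ^ 2 + ‖y.1‖ ^ 2 = 1 ∧ ‖x.2‖ ^ 2 + ‖y.2‖ ^ 2 = 1 := by
    constructor
    · intro h; constructor <;> linarith
    · intro h; linarith [h.1]
  have h_offdiag (p q : ℍ) : 2 * p = -(2 * q) ↔ p + q = 0 := by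
    rw [← mul_neg, mul_right_inj' two_ne_zero, eq_neg_iff_add_eq_zero]
  simp only [hopfH, antipodal, Prod.mk.injEq, pairMatrix, Matrix.star_fin_two, Matrix.mul_fin_two,
    Matrix.fin_two_eq_one_iff, mul_star_self_eq_coe_norm_sq, ← coe_add, ← coe_one, coe_inj, h_entry_10,
    star_eq_zero, h_norms, h_offdiag]
  tauto

lemma hopfH_eq_antipodal_iff_mem_Sp2Set {x y : ℍ × ℍ}
    (hx : ‖x.1‖ ^ 2 + ‖x.2‖ ^ 2 = 1) (hy : ‖y.1‖ ^ 2 + ‖y.2‖ ^ 2 = 1) :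
    hopfH x = antipodal (hopfH y) ↔ (x, y) ∈ Sp2Set := by
  rw [hopfH_eq_antipodal_iff_mul_star_self_eq_one hx hy, mem_Sp2Set_iff_star_mul_self_eq_one,
    mul_eq_one_comm]

lemma hopfHt_eq_hopfH_kConj (x : ℍ × ℍ) : hopfHt x = hopfH (kConj x) := by
  simp only [hopfHt, hopfH, kConj, norm_star, star_star]

lemma norm_sq_add_norm_sq_kConj (x : ℍ × ℍ) :
    ‖(kConj x).1‖ ^ 2 + ‖(kConj x).2‖ ^ 2 = ‖x.1‖ ^ 2 + ‖x.2‖ ^ 2 := by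
  simp only [kConj, norm_star]

/-- Equivalent description of `Sp(2,m)`: for `u₁, …, u_m ∈ S⁷`,
the conditions `h(u₁) = α h(u₂)` and `h̃(u_i) = α h(u_{i+1})` for `2 ≤ i ≤ m−1`
hold iff `(u₁,u₂) ∈ Sp(2)` and `(k u_i, u_{i+1}) ∈ Sp(2)` for `2 ≤ i ≤ m−1`. -/
theorem sp2m_equivalent_description (m : ℕ) (hm : 3 ≤ m)
    (u : ℕ → Quaternion ℝ × Quaternion ℝ)
    (hu : ∀ i, 1 ≤ i → i ≤ m → ‖(u i).1‖ ^ 2 + ‖(u i).2‖ ^ 2 = 1) :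
    (hopfH (u 1) = antipodal (hopfH (u 2)) ∧
      ∀ i, 2 ≤ i → i ≤ m - 1 → hopfHt (u i) = antipodal (hopfH (u (i + 1)))) ↔
    ((u 1, u 2) ∈ Sp2Set ∧
      ∀ i, 2 ≤ i → i ≤ m - 1 → (kConj (u i), u (i + 1)) ∈ Sp2Set) := by
  refine and_congr (hopfH_eq_antipodal_iff_mem_Sp2Set (hu 1 le_rfl (by omega))
    (hu 2 (by omega) (by omega))) (forall₃_congr fun i hi₂ him => ?_)
  rw [hopfHt_eq_hopfH_kConj]
  exact hopfH_eq_antipodal_iff_mem_Sp2Set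
    ((norm_sq_add_norm_sq_kConj (u i)).trans (hu i (by omega) (by omega)))
    (hu (i + 1) (by omega) (by omega))
end

section
/- The (S³)³-action on Sp(2,3) is well defined and free: if (u₁,u₂,u₃) ∈ Sp(2,3) (i.e. u₁,u₂,u₃ ∈ S⁷, h(u₁) = α h(u₂) and h̃(u₂) = α h(u₃)) and q₁,q₂,q₃ are unit quaternions, then (u₁ q̄₁, u₂ q̄₂, q₂ u₃ q̄₃) ∈ Sp(2,3), where multiplication of an element of ℍ×ℍ by quaternions is componentwise; moreover, if (u₁ q̄₁, u₂ q̄₂, q₂ u₃ q̄₃) = (u₁,u₂,u₃) then q₁ = q₂ = q₃ = 1. -/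
/-- Componentwise right multiplication of `u ∈ ℍ × ℍ` by a quaternion. -/
noncomputable def rmul (u : Quaternion ℝ × Quaternion ℝ) (q : Quaternion ℝ) :
    Quaternion ℝ × Quaternion ℝ := (u.1 * q, u.2 * q)

/-- Componentwise left multiplication of `u ∈ ℍ × ℍ` by a quaternion. -/
noncomputable def lmul (q : Quaternion ℝ) (u : Quaternion ℝ × Quaternion ℝ) :
    Quaternion ℝ × Quaternion ℝ := (q * u.1, q * u.2)

/-- Membership in `S⁷ ⊂ ℍ × ℍ`. -/
def memS7 (u : Quaternion ℝ × Quaternion ℝ) : Prop := ‖u.1‖ ^ 2 + ‖u.2‖ ^ 2 = 1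

/-! For a unit quaternion `q`, right multiplication by `q` is an isometry of each factor that
cancels in `a b̄`, so it preserves `S⁷` and `h`, and it turns `ā b` into `q̄ ā b q`; left
multiplication by `q` turns `a b̄` into `q a b̄ q̄`. Both sides of `h̃(u₂) = α h(u₃)` are thus
conjugated by the same `q₂`, and conjugation commutes with `α`. Freeness: a point of `S⁷` has a
nonzero coordinate `a`, and `a q̄ = a` cancels to `q̄ = 1`. -/

open Quaternion

namespace Quaternion

lemma mul_star_eq_one_of_norm_eq_one {q : ℍ[ℝ]} (hq : ‖q‖ = 1) : q * star q = 1 := by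
  rw [self_mul_star, normSq_eq_norm_mul_self, hq, mul_one, coe_one]

end Quaternion

noncomputable def conjSnd (q : ℍ[ℝ]) (x : ℝ × ℍ[ℝ]) : ℝ × ℍ[ℝ] := (x.1, q * x.2 * star q)

lemma antipodal_conjSnd (q : ℍ[ℝ]) (x : ℝ × ℍ[ℝ]) :
    antipodal (conjSnd q x) = conjSnd q (antipodal x) := by
  simp only [antipodal, conjSnd, mul_neg, neg_mul]

section UnitQuaternion

variable {q : ℍ[ℝ]} (u : ℍ[ℝ] × ℍ[ℝ])

lemma memS7_rmul_iff (hq : ‖q‖ = 1) : memS7 (rmul u q) ↔ memS7 u := by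
  simp only [memS7, rmul, norm_mul, hq, mul_one]

lemma memS7_lmul_iff (hq : ‖q‖ = 1) : memS7 (lmul q u) ↔ memS7 u := by
  simp only [memS7, lmul, norm_mul, hq, one_mul]

lemma hopfH_rmul (hq : ‖q‖ = 1) : hopfH (rmul u q) = hopfH u := by
  have hqq := mul_star_eq_one_of_norm_eq_one hq
  simp only [hopfH, rmul, norm_mul, hq, mul_one, star_mul, Prod.mk.injEq, true_and]
  rw [mul_assoc u.1, ← mul_assoc q, hqq, one_mul]

lemma hopfHt_rmul (hq : ‖q‖ = 1) : hopfHt (rmul u q) = conjSnd (star q) (hopfHt u) := by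
  simp only [hopfHt, rmul, conjSnd, norm_mul, hq, mul_one, star_mul, star_star, mul_assoc,
    Prod.mk.injEq, true_and]
  noncomm_ring

lemma hopfH_lmul (hq : ‖q‖ = 1) : hopfH (lmul q u) = conjSnd q (hopfH u) := by
  simp only [hopfH, lmul, conjSnd, norm_mul, hq, one_mul, star_mul, mul_assoc, Prod.mk.injEq,
    true_and]
  noncomm_ring

end UnitQuaternion

lemma one_lmul (u : ℍ[ℝ] × ℍ[ℝ]) : lmul 1 u = u := by
  simp only [lmul, one_mul]

lemma eq_one_of_rmul_star_eq_self {u : ℍ[ℝ] × ℍ[ℝ]} (hu : memS7 u) {q : ℍ[ℝ]}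
    (h : rmul u (star q) = u) : q = 1 := by
  rw [← star_star q, ← star_one]
  congr 1
  obtain ⟨h1, h2⟩ := Prod.ext_iff.mp h
  by_cases ha : u.1 = 0
  · have hb : u.2 ≠ 0 := by
      rintro hb
      simp [memS7, ha, hb] at hu
    exact mul_left_cancel₀ hb (h2.trans (mul_one _).symm)
  · exact mul_left_cancel₀ ha (h1.trans (mul_one _).symm)

/-- The `(S³)³`-action
`(q₁,q₂,q₃)·(u₁,u₂,u₃) = (u₁ q̄₁, u₂ q̄₂, q₂ u₃ q̄₃)` on `Sp(2,3)` is well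
defined and free. -/
theorem sp23_action_well_defined_and_free
    (u₁ u₂ u₃ : Quaternion ℝ × Quaternion ℝ)
    (h₁ : memS7 u₁) (h₂ : memS7 u₂) (h₃ : memS7 u₃)
    (hh : hopfH u₁ = antipodal (hopfH u₂))
    (hht : hopfHt u₂ = antipodal (hopfH u₃))
    (q₁ q₂ q₃ : Quaternion ℝ)
    (hq₁ : ‖q₁‖ = 1) (hq₂ : ‖q₂‖ = 1) (hq₃ : ‖q₃‖ = 1) :
    (memS7 (rmul u₁ (star q₁)) ∧ memS7 (rmul u₂ (star q₂)) ∧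
     memS7 (lmul q₂ (rmul u₃ (star q₃))) ∧
     hopfH (rmul u₁ (star q₁)) = antipodal (hopfH (rmul u₂ (star q₂))) ∧
     hopfHt (rmul u₂ (star q₂)) = antipodal (hopfH (lmul q₂ (rmul u₃ (star q₃))))) ∧
    ((rmul u₁ (star q₁) = u₁ ∧ rmul u₂ (star q₂) = u₂ ∧
      lmul q₂ (rmul u₃ (star q₃)) = u₃) → q₁ = 1 ∧ q₂ = 1 ∧ q₃ = 1) := by
  have hq₁' : ‖star q₁‖ = 1 := by rwa [norm_star]
  have hq₂' : ‖star q₂‖ = 1 := by rwa [norm_star]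
  have hq₃' : ‖star q₃‖ = 1 := by rwa [norm_star]
  refine ⟨⟨(memS7_rmul_iff u₁ hq₁').2 h₁, (memS7_rmul_iff u₂ hq₂').2 h₂,
    (memS7_lmul_iff _ hq₂).2 ((memS7_rmul_iff u₃ hq₃').2 h₃), ?_, ?_⟩, ?_⟩
  · rw [hopfH_rmul u₁ hq₁', hopfH_rmul u₂ hq₂', hh]
  · rw [hopfHt_rmul u₂ hq₂', hopfH_lmul _ hq₂, hopfH_rmul u₃ hq₃', hht, antipodal_conjSnd,
      star_star]
  · rintro ⟨fix₁, fix₂, fix₃⟩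
    have hq₂_one : q₂ = 1 := eq_one_of_rmul_star_eq_self h₂ fix₂
    subst hq₂_one
    rw [one_lmul] at fix₃
    exact ⟨eq_one_of_rmul_star_eq_self h₁ fix₁, rfl, eq_one_of_rmul_star_eq_self h₃ fix₃⟩
end

section
/- The bundle Sp(2)×_{pr₂=pr₁}Sp(2) → Sp(2) is trivial via an explicit map: the map Φ from Sp(2) × S³ to {(Q₁,Q₂) ∈ Sp(2)×Sp(2) : pr₂(Q₁) = pr₁(Q₂)}, defined by Φ((u,v), q) = ((u,v), (v, u·q)) where u·q denotes componentwise right multiplication of u ∈ ℍ×ℍ by the unit quaternion q, is well defined (in particular (v, u·q) ∈ Sp(2) whenever (u,v) ∈ Sp(2)) and is a homeomorphism onto {(Q₁,Q₂) ∈ Sp(2)×Sp(2) : pr₂(Q₁) = pr₁(Q₂)} with its subspace topology. -/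
/-- The unit quaternions `S³ ⊂ ℍ`. -/
def S3 : Type := {q : Quaternion ℝ // ‖q‖ = 1}

noncomputable instance : TopologicalSpace S3 := by unfold S3; infer_instance

/-- The total space of the bundle `Sp(2) ×_{pr₂ = pr₁} Sp(2) → Sp(2)`:
pairs of elements of `Sp(2)` such that the second column of the first equals
the first column of the second. -/
def FiberProd : Type :=
  {P : ↥Sp2Set × ↥Sp2Set // P.1.val.2 = P.2.val.1}

noncomputable instance : TopologicalSpace FiberProd := by unfold FiberProd; infer_instance

open Matrix Quaternion

noncomputable def quatInner (x y : ℍ[ℝ] × ℍ[ℝ]) : ℍ[ℝ] := star x.1 * y.1 + star x.2 * y.2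

lemma star_quatInner (x y : ℍ[ℝ] × ℍ[ℝ]) : star (quatInner x y) = quatInner y x := by
  simp [quatInner]

lemma quatInner_mul_right (x y : ℍ[ℝ] × ℍ[ℝ]) (q : ℍ[ℝ]) :
    quatInner x (y.1 * q, y.2 * q) = quatInner x y * q := by
  simp only [quatInner, add_mul, mul_assoc]

lemma quatInner_self (x : ℍ[ℝ] × ℍ[ℝ]) :
    quatInner x x = ((‖x.1‖ ^ 2 + ‖x.2‖ ^ 2 : ℝ) : ℍ[ℝ]) := by
  simp [quatInner, star_mul_self, normSq_eq_norm_mul_self, sq]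

lemma quatInner_self_eq_one_iff (x : ℍ[ℝ] × ℍ[ℝ]) :
    quatInner x x = 1 ↔ ‖x.1‖ ^ 2 + ‖x.2‖ ^ 2 = 1 := by
  rw [quatInner_self, ← Quaternion.coe_one, Quaternion.coe_inj]

lemma mem_Sp2Set_swap_mul {u v : ℍ[ℝ] × ℍ[ℝ]} (h : (u, v) ∈ Sp2Set) {q : ℍ[ℝ]} (hq : ‖q‖ = 1) :
    (v, (u.1 * q, u.2 * q)) ∈ Sp2Set := by
  obtain ⟨hu, hv, huv⟩ := h
  refine ⟨hv, by simpa [norm_mul, hq] using hu, ?_⟩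
  change quatInner v (u.1 * q, u.2 * q) = 0
  rw [quatInner_mul_right, ← star_quatInner, show quatInner u v = 0 from huv, star_zero, zero_mul]

def colMatrix (P : (ℍ[ℝ] × ℍ[ℝ]) × (ℍ[ℝ] × ℍ[ℝ])) : Matrix (Fin 2) (Fin 2) ℍ[ℝ] :=
  !![P.1.1, P.2.1; P.1.2, P.2.2]

lemma conjTranspose_colMatrix_mul_self (P : (ℍ[ℝ] × ℍ[ℝ]) × (ℍ[ℝ] × ℍ[ℝ])) :
    (colMatrix P)ᴴ * colMatrix P =
      !![quatInner P.1 P.1, quatInner P.1 P.2; star (quatInner P.1 P.2), quatInner P.2 P.2] := by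
  refine Matrix.ext fun i j => ?_
  fin_cases i <;> fin_cases j <;> simp [colMatrix, quatInner, mul_apply, Fin.sum_univ_two]

/-- `ℍ` is a division ring, hence stably finite, so the left inverse `Aᴴ` of `A` is also a
right inverse: the rows of an element of `Sp(2)` are orthonormal as well. -/
lemma colMatrix_mul_conjTranspose_self {P : (ℍ[ℝ] × ℍ[ℝ]) × (ℍ[ℝ] × ℍ[ℝ])} (hP : P ∈ Sp2Set) :
    colMatrix P * (colMatrix P)ᴴ = 1 := by
  obtain ⟨h1, h2, h12⟩ := hP
  have h12 : quatInner P.1 P.2 = 0 := h12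
  rw [← mul_eq_one_comm, conjTranspose_colMatrix_mul_self, h12, star_zero,
    (quatInner_self_eq_one_iff _).2 h1, (quatInner_self_eq_one_iff _).2 h2, one_fin_two]

/-- `w = A Aᴴ w = A (⟨u, w⟩, ⟨v, w⟩) = A (⟨u, w⟩, 0) = u ⟨u, w⟩` for `A` with columns `u, v`. -/
lemma eq_mul_quatInner_of_mem_Sp2Set {P Q : (ℍ[ℝ] × ℍ[ℝ]) × (ℍ[ℝ] × ℍ[ℝ])} (hP : P ∈ Sp2Set)
    (hQ : Q ∈ Sp2Set) (h : P.2 = Q.1) :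
    Q.2 = (P.1.1 * quatInner P.1 Q.2, P.1.2 * quatInner P.1 Q.2) := by
  have hw : (colMatrix P)ᴴ *ᵥ ![Q.2.1, Q.2.2] = ![quatInner P.1 Q.2, 0] := by
    have hvw : quatInner P.2 Q.2 = 0 := h ▸ hQ.2.2
    ext i : 1
    fin_cases i
    · simp [colMatrix, quatInner, mulVec, dotProduct, Fin.sum_univ_two]
    · simpa [colMatrix, quatInner, mulVec, dotProduct, Fin.sum_univ_two] using hvw
  have hQ2 := congrArg (colMatrix P *ᵥ ·) hw
  simp only [mulVec_mulVec, colMatrix_mul_conjTranspose_self hP, one_mulVec] at hQ2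
  refine Prod.ext ?_ ?_
  · simpa [colMatrix, mulVec, dotProduct, Fin.sum_univ_two] using congrFun hQ2 0
  · simpa [colMatrix, mulVec, dotProduct, Fin.sum_univ_two] using congrFun hQ2 1

lemma norm_quatInner_eq_one {P Q : (ℍ[ℝ] × ℍ[ℝ]) × (ℍ[ℝ] × ℍ[ℝ])} (hP : P ∈ Sp2Set)
    (hQ : Q ∈ Sp2Set) (h : P.2 = Q.1) : ‖quatInner P.1 Q.2‖ = 1 := by
  have hw := hQ.2.1
  rw [eq_mul_quatInner_of_mem_Sp2Set hP hQ h] at hw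
  simp only [norm_mul, mul_pow, ← add_mul, hP.1, one_mul] at hw
  exact (pow_eq_one_iff_of_nonneg (norm_nonneg _) two_ne_zero).1 hw

lemma quatInner_mul_right_self {u : ℍ[ℝ] × ℍ[ℝ]} (hu : ‖u.1‖ ^ 2 + ‖u.2‖ ^ 2 = 1) (q : ℍ[ℝ]) :
    quatInner u (u.1 * q, u.2 * q) = q := by
  rw [quatInner_mul_right, (quatInner_self_eq_one_iff u).2 hu, one_mul]

@[fun_prop]
lemma Continuous.quatInner {α : Type*} [TopologicalSpace α] {f g : α → ℍ[ℝ] × ℍ[ℝ]}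
    (hf : Continuous f) (hg : Continuous g) : Continuous fun x => quatInner (f x) (g x) := by
  unfold _root_.quatInner
  fun_prop

noncomputable def sp2FiberProdHomeomorph : (↥Sp2Set × S3) ≃ₜ FiberProd where
  toFun x := ⟨(x.1, ⟨(x.1.val.2, (x.1.val.1.1 * x.2.val, x.1.val.1.2 * x.2.val)),
    mem_Sp2Set_swap_mul x.1.prop x.2.prop⟩), rfl⟩
  invFun X := (X.val.1, ⟨quatInner X.val.1.val.1 X.val.2.val.2,
    norm_quatInner_eq_one X.val.1.prop X.val.2.prop X.prop⟩)
  left_inv x := Prod.ext rfl (Subtype.ext (quatInner_mul_right_self x.1.prop.1 x.2.val))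
  right_inv X := Subtype.ext (Prod.ext rfl (Subtype.ext (Prod.ext X.prop
    (eq_mul_quatInner_of_mem_Sp2Set X.val.1.prop X.val.2.prop X.prop).symm)))
  continuous_toFun := by fun_prop
  continuous_invFun := by fun_prop

/-- The map `Φ((u,v), q) = ((u,v), (v, u·q))` is well defined
(in particular `(v, u·q) ∈ Sp(2)` whenever `(u,v) ∈ Sp(2)` and `‖q‖ = 1`) and
is a homeomorphism from `Sp(2) × S³` onto
`{(Q₁,Q₂) ∈ Sp(2) × Sp(2) : pr₂(Q₁) = pr₁(Q₂)}`; i.e. the bundle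
`Sp(2) ×_{pr₂ = pr₁} Sp(2) → Sp(2)` is trivial via an explicit map. -/
theorem sp2_fiber_product_trivial :
    (∀ u v : Quaternion ℝ × Quaternion ℝ, (u, v) ∈ Sp2Set →
      ∀ q : Quaternion ℝ, ‖q‖ = 1 → (v, (u.1 * q, u.2 * q)) ∈ Sp2Set) ∧
    ∃ Φ : (↥Sp2Set × S3) ≃ₜ FiberProd,
      ∀ (P : ↥Sp2Set) (q : S3),
        (Φ (P, q)).val.1.val = P.val ∧
        (Φ (P, q)).val.2.val = (P.val.2, (P.val.1.1 * q.val, P.val.1.2 * q.val)) :=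
  ⟨fun _ _ h _ hq => mem_Sp2Set_swap_mul h hq, sp2FiberProdHomeomorph, fun _ _ => ⟨rfl, rfl⟩⟩
end

section
/- There exists a continuous map F : Sp(2) → Sp(2) such that for every (u,v) ∈ Sp(2) one has pr₁(F(u,v)) = k(v), where k is componentwise quaternionic conjugation; that is, the first column of F(Q) equals the conjugate of the second column of Q, so (Q, F(Q)) belongs to Sp(2,3)' = {(Q₁,Q₂) ∈ Sp(2)×Sp(2) : k(pr₂(Q₁)) = pr₁(Q₂)} for every Q ∈ Sp(2). -/
open Quaternion

attribute [local fun_prop] continuous_coe continuous_re continuous_im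

namespace Sp2

noncomputable section

def hInner (u v : ℍ × ℍ) : ℍ := star u.1 * v.1 + star u.2 * v.2

def sqNorm (w : ℍ × ℍ) : ℝ := ‖w.1‖ ^ 2 + ‖w.2‖ ^ 2

lemma sq_norm_eq (q : ℍ) : ‖q‖ ^ 2 = q.re ^ 2 + q.imI ^ 2 + q.imJ ^ 2 + q.imK ^ 2 := by
  rw [sq, ← normSq_eq_norm_mul_self, normSq_def']

lemma hInner_self (w : ℍ × ℍ) : hInner w w = (sqNorm w : ℍ) := by
  simp only [hInner, sqNorm, star_mul_self, normSq_eq_norm_mul_self, sq, coe_add]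

lemma star_hInner (u v : ℍ × ℍ) : star (hInner u v) = hInner v u := by
  simp [hInner]

lemma sqNorm_pos {w : ℍ × ℍ} (hw : w ≠ 0) : 0 < sqNorm w := by
  refine lt_of_le_of_ne (by unfold sqNorm; positivity) (Ne.symm fun h => hw ?_)
  obtain ⟨h1, h2⟩ := (add_eq_zero_iff_of_nonneg (sq_nonneg _) (sq_nonneg _)).mp h
  exact Prod.ext (by simpa using h1) (by simpa using h2)

lemma sqNorm_smul (t : ℝ) (w : ℍ × ℍ) : sqNorm (t • w) = t ^ 2 * sqNorm w := by
  simp only [sqNorm, Prod.smul_fst, Prod.smul_snd, norm_smul, Real.norm_eq_abs, mul_pow, sq_abs]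
  ring

lemma sqNorm_kConj (w : ℍ × ℍ) : sqNorm (kConj w) = sqNorm w := by
  simp [sqNorm, kConj]

lemma re_sq_add_re_sq_le_sqNorm (w : ℍ × ℍ) : w.1.re ^ 2 + w.2.re ^ 2 ≤ sqNorm w := by
  rw [sqNorm, sq_norm_eq, sq_norm_eq]
  nlinarith [sq_nonneg w.1.imI, sq_nonneg w.1.imJ, sq_nonneg w.1.imK, sq_nonneg w.2.imI,
    sq_nonneg w.2.imJ, sq_nonneg w.2.imK]

def orthProj (q x : ℍ × ℍ) : ℍ × ℍ := (x.1 - q.1 * hInner q x, x.2 - q.2 * hInner q x)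

lemma hInner_orthProj {q : ℍ × ℍ} (hq : sqNorm q = 1) (x : ℍ × ℍ) :
    hInner q (orthProj q x) = 0 := by
  calc _ = hInner q x - hInner q q * hInner q x := by
        simp only [hInner, orthProj]; noncomm_ring
    _ = 0 := by rw [hInner_self, hq, coe_one, one_mul, sub_self]

lemma orthProj_ne_zero {p q x : ℍ × ℍ} (hpq : hInner p q ≠ 0) (hpx : hInner p x = 0)
    (hx : x ≠ 0) : orthProj q x ≠ 0 := by
  intro h0
  set r := hInner q x
  have h1 : x.1 = q.1 * r := sub_eq_zero.mp (congrArg Prod.fst h0)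
  have h2 : x.2 = q.2 * r := sub_eq_zero.mp (congrArg Prod.snd h0)
  have hr : r = 0 := by
    refine (mul_eq_zero.mp ?_).resolve_left hpq
    rw [← hpx, hInner, hInner, h1, h2, add_mul, mul_assoc, mul_assoc]
  exact hx (Prod.ext (by rw [h1, hr, mul_zero]; rfl) (by rw [h2, hr, mul_zero]; rfl))

def normalize (w : ℍ × ℍ) : ℍ × ℍ := (√(sqNorm w))⁻¹ • w

lemma sqNorm_normalize {w : ℍ × ℍ} (hw : w ≠ 0) : sqNorm (normalize w) = 1 := by
  rw [normalize, sqNorm_smul, inv_pow, Real.sq_sqrt (sqNorm_pos hw).le,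
    inv_mul_cancel₀ (sqNorm_pos hw).ne']

lemma hInner_normalize_eq_zero {q w : ℍ × ℍ} (h : hInner q w = 0) :
    hInner q (normalize w) = 0 := by
  simp only [hInner, normalize, Prod.smul_fst, Prod.smul_snd, mul_smul_comm, ← smul_add]
  rw [← hInner, h, smul_zero]

def rot (c s : ℝ) (w : ℍ × ℍ) : ℍ × ℍ :=
  (w.1.re + c • w.1.im + s • w.2.im, w.2.re + c • w.2.im - s • w.1.im)

lemma rot_one_zero (w : ℍ × ℍ) : rot 1 0 w = w := by
  simp [rot]

lemma rot_neg_one_zero (w : ℍ × ℍ) : rot (-1) 0 w = kConj w := by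
  ext <;> simp [rot, kConj, sub_eq_add_neg]

lemma re_hInner_rot (c s c' s' : ℝ) (w : ℍ × ℍ) :
    (hInner (rot c s w) (rot c' s' w)).re =
      w.1.re ^ 2 + w.2.re ^ 2 + (c * c' + s * s') * (sqNorm w - (w.1.re ^ 2 + w.2.re ^ 2)) := by
  simp only [hInner, rot, star_add, star_coe, Quaternion.star_smul, star_im, smul_neg, star_sub,
    sub_neg_eq_add, re_add, re_mul, re_coe, re_neg, re_smul, re_im, smul_eq_mul, mul_zero, neg_zero,
    add_zero, imI_add, imI_coe, imI_neg, imI_smul, imI_im, zero_add, imJ_add, imJ_coe, imJ_neg,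
    imJ_smul, imJ_im, imK_add, imK_coe, imK_neg, imK_smul, imK_im, re_sub, sub_zero, imI_sub,
    imJ_sub, imK_sub, sqNorm, sq_norm_eq]
  ring

lemma sqNorm_rot {c s : ℝ} (h : c ^ 2 + s ^ 2 = 1) (w : ℍ × ℍ) :
    sqNorm (rot c s w) = sqNorm w := by
  have := re_hInner_rot c s c s w
  rw [hInner_self, re_coe, ← sq, ← sq, h] at this
  linarith

lemma hInner_rot_ne_zero {c s c' s' : ℝ} (h : 0 < c * c' + s * s') {w : ℍ × ℍ}
    (hw : sqNorm w = 1) : hInner (rot c s w) (rot c' s' w) ≠ 0 := by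
  intro h0
  have := re_hInner_rot c s c' s' w
  rw [h0, re_zero, hw] at this
  have hR := re_sq_add_re_sq_le_sqNorm w
  rw [hw] at hR
  nlinarith [mul_nonneg h.le (sub_nonneg.2 hR), sq_nonneg w.1.re, sq_nonneg w.2.re]

lemma orthProj_step {p q x : ℍ × ℍ} (hq : sqNorm q = 1) (hpq : hInner p q ≠ 0)
    (hx : x ≠ 0 ∧ hInner p x = 0) : orthProj q x ≠ 0 ∧ hInner q (orthProj q x) = 0 :=
  ⟨orthProj_ne_zero hpq hx.2 hx.1, hInner_orthProj hq x⟩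

def transport (u v : ℍ × ℍ) : ℍ × ℍ :=
  orthProj (kConj v) (orthProj (rot (-7/25) (24/25) v) (orthProj (rot (3/5) (4/5) v) u))

lemma transport_spec {u v : ℍ × ℍ} (hv : sqNorm v = 1) (hu : u ≠ 0) (hvu : hInner v u = 0) :
    transport u v ≠ 0 ∧ hInner (kConj v) (transport u v) = 0 := by
  have unit {c s : ℝ} (h : c ^ 2 + s ^ 2 = 1) : sqNorm (rot c s v) = 1 := (sqNorm_rot h v).trans hv
  have step₁ := orthProj_step (p := rot 1 0 v) (q := rot (3/5) (4/5) v) (unit (by norm_num))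
    (hInner_rot_ne_zero (by norm_num) hv) ⟨hu, by rwa [rot_one_zero]⟩
  have step₂ := orthProj_step (q := rot (-7/25) (24/25) v) (unit (by norm_num))
    (hInner_rot_ne_zero (by norm_num) hv) step₁
  have ne₃ : hInner (rot (-7/25) (24/25) v) (kConj v) ≠ 0 := by
    rw [← rot_neg_one_zero]; exact hInner_rot_ne_zero (by norm_num) hv
  exact orthProj_step (by rwa [sqNorm_kConj]) ne₃ step₂

lemma continuous_transport : Continuous fun P : (ℍ × ℍ) × (ℍ × ℍ) => transport P.1 P.2 := by
  unfold transport orthProj hInner rot kConj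
  fun_prop

lemma continuous_normalize_comp {X : Type*} [TopologicalSpace X] {f : X → ℍ × ℍ}
    (hf : Continuous f) (hf₀ : ∀ x, f x ≠ 0) : Continuous fun x => normalize (f x) := by
  have hN : Continuous fun x => sqNorm (f x) := by unfold sqNorm; fun_prop
  exact (hN.sqrt.inv₀ fun x => (Real.sqrt_pos.2 (sqNorm_pos (hf₀ x))).ne').smul hf

lemma transport_spec_of_mem {P : (ℍ × ℍ) × (ℍ × ℍ)} (hP : P ∈ Sp2Set) :
    transport P.1 P.2 ≠ 0 ∧ hInner (kConj P.2) (transport P.1 P.2) = 0 := by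
  obtain ⟨hu, hv, huv⟩ := hP
  have hvu : hInner P.2 P.1 = 0 := by
    rw [← star_hInner, show hInner P.1 P.2 = 0 from huv, star_zero]
  exact transport_spec hv (fun h => by simp [h] at hu) hvu

def completion (P : (ℍ × ℍ) × (ℍ × ℍ)) : (ℍ × ℍ) × (ℍ × ℍ) :=
  (kConj P.2, normalize (transport P.1 P.2))

lemma completion_mem {P : (ℍ × ℍ) × (ℍ × ℍ)} (hP : P ∈ Sp2Set) : completion P ∈ Sp2Set :=
  ⟨(sqNorm_kConj P.2).trans hP.2.1, sqNorm_normalize (transport_spec_of_mem hP).1,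
    hInner_normalize_eq_zero (transport_spec_of_mem hP).2⟩

lemma continuous_completion : Continuous fun Q : Sp2Set => completion Q.1 := by
  have hQ : Continuous fun Q : Sp2Set => Q.1 := continuous_subtype_val
  have hk : Continuous kConj := by unfold kConj; fun_prop
  exact (hk.comp hQ.snd).prodMk <|
    continuous_normalize_comp (continuous_transport.comp hQ) fun Q => (transport_spec_of_mem Q.2).1

end

end Sp2

/-- There is a continuous map `F : Sp(2) → Sp(2)` whose value at
`Q = (u,v)` has first column `k(v)`, the componentwise conjugate of the second
column of `Q`; hence `(Q, F(Q))` lies in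
`Sp(2,3)' = {(Q₁,Q₂) : k(pr₂ Q₁) = pr₁ Q₂}` for every `Q ∈ Sp(2)`. -/
theorem exists_continuous_F :
    ∃ F : C(↥Sp2Set, ↥Sp2Set),
      ∀ Q : ↥Sp2Set, (F Q).val.1 = kConj Q.val.2 :=
  ⟨⟨fun Q => ⟨Sp2.completion Q.1, Sp2.completion_mem Q.2⟩,
    Sp2.continuous_completion.subtype_mk _⟩, fun _ => rfl⟩
end
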